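/- Let A be an n×n real symmetric matrix with nonnegative diagonal entries, and let S be a nonempty proper subset of indices. Suppose: (i) A i i ≥ r_i^S(A) for all i ∈ S; (ii) A i i ≥ r_i^{S̄}(A) for all i ∈ S̄; (iii) for all i ∈ S, j ∈ S̄, either (A i i - r_i^S(A))(A j j - r_j^{S̄}(A)) ≥ r_i^{S̄}(A) r_j^S(A) or A i i ≥ r_i(A); (iv) for all i ∈ S̄, j ∈ S, either (A i i - r_i^{S̄}(A))(A j j - r_j^S(A)) ≥ r_i^S(A) r_j^{S̄}(A) or A i i ≥ r_i(A). Then A is positive semidefinite. -/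

import Mathlib

/-!
Let `λ < 0` be an eigenvalue with eigenvector `v`, and pick `i ∈ S`, `j ∈ Sᶜ` maximising `|v|` on
`S` and on `Sᶜ`, with `a = |v i|`, `b = |v j|`. Gershgorin's estimate on rows `i` and `j` gives
`(α - λ) a ≤ r_i^{S̄} b` and `(β - λ) b ≤ r_j^S a` with `α = A i i - r_i^S ≥ 0`,
`β = A j j - r_j^{S̄} ≥ 0`, whence `α β < (α - λ)(β - λ) ≤ r_i^{S̄} r_j^S`.
Conditions (iii) and (iv) at the pair `(i, j)` both exclude this.
-/

/-- `r_i^T(A) = ∑_{j ∈ T, j ≠ i} |A i j|` for a real matrix. -/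
def rT {n : ℕ} (A : Matrix (Fin n) (Fin n) ℝ) (T : Finset (Fin n)) (i : Fin n) : ℝ :=
  ∑ j ∈ T.erase i, |A i j|

open Finset Matrix

section

variable {n : ℕ} {A : Matrix (Fin n) (Fin n) ℝ} {S : Finset (Fin n)}

lemma rT_nonneg (A : Matrix (Fin n) (Fin n) ℝ) (T : Finset (Fin n)) (i : Fin n) :
    0 ≤ rT A T i :=
  sum_nonneg fun _ _ => abs_nonneg _

lemma sum_erase_add_sum_compl_erase {ι M : Type*} [Fintype ι] [DecidableEq ι] [AddCommMonoid M]
    (f : ι → M) (S : Finset ι) (i : ι) :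
    ∑ p ∈ S.erase i, f p + ∑ p ∈ Sᶜ.erase i, f p = ∑ p ∈ univ.erase i, f p := by
  rw [← sum_union (disjoint_compl_right.mono (erase_subset i S) (erase_subset i Sᶜ)),
    ← erase_union_distrib, union_compl]

lemma sub_mul_abs_le_of_mulVec_eq_smul {lam : ℝ} {v : Fin n → ℝ} (heig : A *ᵥ v = lam • v)
    (i : Fin n) {MS Mc : ℝ} (hMS : ∀ p ∈ S, |v p| ≤ MS) (hMc : ∀ p ∈ Sᶜ, |v p| ≤ Mc) :
    (A i i - lam) * |v i| ≤ rT A S i * MS + rT A Sᶜ i * Mc := by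
  have hrow : (A i i - lam) * v i = -∑ p ∈ univ.erase i, A i p * v p := by
    have h := congrFun heig i
    rw [mulVec, dotProduct, ← add_sum_erase _ _ (mem_univ i)] at h
    simp only [Pi.smul_apply, smul_eq_mul] at h
    linarith
  have hbound (T : Finset (Fin n)) (M : ℝ) (hM : ∀ p ∈ T, |v p| ≤ M) :
      ∑ p ∈ T.erase i, |A i p * v p| ≤ rT A T i * M := by
    rw [rT, sum_mul]
    exact sum_le_sum fun p hp => by
      rw [abs_mul]
      exact mul_le_mul_of_nonneg_left (hM p (mem_of_mem_erase hp)) (abs_nonneg _)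
  calc (A i i - lam) * |v i|
      ≤ |(A i i - lam) * v i| := by rw [abs_mul]; gcongr; exact le_abs_self _
    _ = |∑ p ∈ univ.erase i, A i p * v p| := by rw [hrow, abs_neg]
    _ ≤ ∑ p ∈ univ.erase i, |A i p * v p| := abs_sum_le_sum_abs _ _
    _ = ∑ p ∈ S.erase i, |A i p * v p| + ∑ p ∈ Sᶜ.erase i, |A i p * v p| :=
      (sum_erase_add_sum_compl_erase _ S i).symm
    _ ≤ rT A S i * MS + rT A Sᶜ i * Mc := add_le_add (hbound S MS hMS) (hbound Sᶜ Mc hMc)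

lemma mul_lt_mul_of_cross_bounds {α β μ a b r s : ℝ} (hα : 0 ≤ α) (hβ : 0 ≤ β) (hμ : 0 < μ)
    (ha : 0 ≤ a) (hb : 0 ≤ b) (hab : 0 < a + b)
    (hra : (α + μ) * a ≤ r * b) (hsb : (β + μ) * b ≤ s * a) :
    α * β < r * s := by
  have ha' : 0 < a := by
    by_contra! h
    obtain rfl : a = 0 := le_antisymm h ha
    nlinarith [mul_pos (by linarith : 0 < β + μ) (by linarith : 0 < b)]
  have hb' : 0 < b := by
    by_contra! h
    obtain rfl : b = 0 := le_antisymm h hb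
    nlinarith [mul_pos (by linarith : 0 < α + μ) ha']
  have hprod : (α + μ) * (β + μ) * (a * b) ≤ r * s * (a * b) :=
    calc (α + μ) * (β + μ) * (a * b) = (α + μ) * a * ((β + μ) * b) := by ring
      _ ≤ r * b * (s * a) :=
        mul_le_mul hra hsb (by positivity) ((mul_nonneg (by positivity) ha).trans hra)
      _ = r * s * (a * b) := by ring
  calc α * β < (α + μ) * (β + μ) := by nlinarith [mul_pos hμ hμ]
    _ ≤ r * s := le_of_mul_le_mul_right hprod (mul_pos ha' hb')

lemma rT_mul_rT_le {i j : Fin n} (h3 : rT A Sᶜ i * rT A S j ≤ (A i i - rT A S i) * (A j j - rT A Sᶜ j) ∨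
      rT A S i + rT A Sᶜ i ≤ A i i)
    (h4 : rT A S j * rT A Sᶜ i ≤ (A j j - rT A Sᶜ j) * (A i i - rT A S i) ∨
      rT A S j + rT A Sᶜ j ≤ A j j) :
    rT A Sᶜ i * rT A S j ≤ (A i i - rT A S i) * (A j j - rT A Sᶜ j) := by
  rcases h3 with h3 | hi
  · exact h3
  rcases h4 with h4 | hj
  · linarith
  exact mul_le_mul (by linarith) (by linarith) (rT_nonneg A S j)
    (le_trans (rT_nonneg A Sᶜ i) (by linarith))

lemma nonneg_of_mulVec_eq_smul (hS : S.Nonempty) (hSc : Sᶜ.Nonempty)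
    (h1 : ∀ i ∈ S, rT A S i ≤ A i i)
    (h2 : ∀ i ∈ Sᶜ, rT A Sᶜ i ≤ A i i)
    (h3 : ∀ i ∈ S, ∀ j ∈ Sᶜ,
      rT A Sᶜ i * rT A S j ≤ (A i i - rT A S i) * (A j j - rT A Sᶜ j) ∨
      rT A S i + rT A Sᶜ i ≤ A i i)
    (h4 : ∀ i ∈ Sᶜ, ∀ j ∈ S,
      rT A S i * rT A Sᶜ j ≤ (A i i - rT A Sᶜ i) * (A j j - rT A S j) ∨
      rT A S i + rT A Sᶜ i ≤ A i i)
    {lam : ℝ} {v : Fin n → ℝ} (hv : v ≠ 0) (heig : A *ᵥ v = lam • v) :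
    0 ≤ lam := by
  by_contra! hlam
  obtain ⟨i, hi, hmaxS⟩ := S.exists_max_image (fun p => |v p|) hS
  obtain ⟨j, hj, hmaxSc⟩ := Sᶜ.exists_max_image (fun p => |v p|) hSc
  have hrowi := sub_mul_abs_le_of_mulVec_eq_smul heig i hmaxS hmaxSc
  have hrowj := sub_mul_abs_le_of_mulVec_eq_smul heig j hmaxS hmaxSc
  have hpos : 0 < |v i| + |v j| := by
    obtain ⟨p, hp⟩ := Function.ne_iff.mp hv
    have hvp : 0 < |v p| := abs_pos.mpr hp
    by_cases hpS : p ∈ S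
    · linarith [hmaxS p hpS, abs_nonneg (v j)]
    · linarith [hmaxSc p (mem_compl.mpr hpS), abs_nonneg (v i)]
  have hlt := mul_lt_mul_of_cross_bounds (r := rT A Sᶜ i) (s := rT A S j)
    (sub_nonneg.mpr (h1 i hi)) (sub_nonneg.mpr (h2 j hj))
    (neg_pos.mpr hlam) (abs_nonneg _) (abs_nonneg _) hpos
    (by linear_combination hrowi) (by linear_combination hrowj)
  exact (rT_mul_rT_le (h3 i hi j hj) (h4 j hj i hi)).not_gt hlt

end

theorem stmt_18_general {n : ℕ} (A : Matrix (Fin n) (Fin n) ℝ) (hsym : A.IsSymm)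
    (S : Finset (Fin n)) (hS : S.Nonempty) (hSc : Sᶜ.Nonempty)
    (h1 : ∀ i ∈ S, rT A S i ≤ A i i)
    (h2 : ∀ i ∈ Sᶜ, rT A Sᶜ i ≤ A i i)
    (h3 : ∀ i ∈ S, ∀ j ∈ Sᶜ,
      rT A Sᶜ i * rT A S j ≤ (A i i - rT A S i) * (A j j - rT A Sᶜ j) ∨
      rT A S i + rT A Sᶜ i ≤ A i i)
    (h4 : ∀ i ∈ Sᶜ, ∀ j ∈ S,
      rT A S i * rT A Sᶜ j ≤ (A i i - rT A Sᶜ i) * (A j j - rT A S j) ∨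
      rT A S i + rT A Sᶜ i ≤ A i i) :
    A.PosSemidef := by
  have hA : A.IsHermitian := isHermitian_iff_isSymm.mpr hsym
  refine hA.posSemidef_iff_eigenvalues_nonneg.mpr fun k => ?_
  exact nonneg_of_mulVec_eq_smul hS hSc h1 h2 h3 h4
    (fun h => hA.eigenvectorBasis.orthonormal.ne_zero k ((WithLp.ofLp_eq_zero 2).mp h))
    (hA.mulVec_eigenvectorBasis k)

theorem stmt_18 {n : ℕ} (hn : 2 ≤ n) (A : Matrix (Fin n) (Fin n) ℝ) (hsym : A.IsSymm)
    (hdiag : ∀ k, 0 ≤ A k k)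
    (S : Finset (Fin n)) (hS : S.Nonempty) (hSc : Sᶜ.Nonempty)
    (h1 : ∀ i ∈ S, rT A S i ≤ A i i)
    (h2 : ∀ i ∈ Sᶜ, rT A Sᶜ i ≤ A i i)
    (h3 : ∀ i ∈ S, ∀ j ∈ Sᶜ,
      rT A Sᶜ i * rT A S j ≤ (A i i - rT A S i) * (A j j - rT A Sᶜ j) ∨
      rT A S i + rT A Sᶜ i ≤ A i i)
    (h4 : ∀ i ∈ Sᶜ, ∀ j ∈ S,
      rT A S i * rT A Sᶜ j ≤ (A i i - rT A Sᶜ i) * (A j j - rT A S j) ∨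
      rT A S i + rT A Sᶜ i ≤ A i i) :
    A.PosSemidef :=
  stmt_18_general A hsym S hS hSc h1 h2 h3 h4
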